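/- arXiv:1806.06434 — 5 statements merged into one kernel-verified Lean document; each statement's English description precedes it below -/
import Mathlib

section
/- A function f : S^{2×2} → ℝ is symmetric polyconvex if and only if there exists a convex function g : S^{2×2} × ℝ → ℝ that is non-increasing in its second variable (i.e., g(ε,t₁) ≥ g(ε,t₂) whenever t₁ ≤ t₂) such that f(ε) = g(ε, det ε) for all ε ∈ S^{2×2}. -/
open Matrix

/-- The symmetric part `(F + Fᵀ)/2` of a 2×2 matrix. -/
noncomputable def symPart (F : Matrix (Fin 2) (Fin 2) ℝ) : Matrix (Fin 2) (Fin 2) ℝ :=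
  (1 / 2 : ℝ) • (F + Fᵀ)

/-- A function `W : ℝ^{2×2} → ℝ` is polyconvex if there is a convex function
`G : ℝ^{2×2} × ℝ → ℝ` with `W F = G (F, det F)` for all `F`. -/
def Polyconvex2 (W : Matrix (Fin 2) (Fin 2) ℝ → ℝ) : Prop :=
  ∃ G : Matrix (Fin 2) (Fin 2) ℝ × ℝ → ℝ,
    ConvexOn ℝ Set.univ G ∧ ∀ F : Matrix (Fin 2) (Fin 2) ℝ, W F = G (F, F.det)

/-- `f : S^{2×2} → ℝ` is symmetric polyconvex if `F ↦ f (Fˢ)` is polyconvex. -/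
def SymPolyconvex2 (f : Matrix (Fin 2) (Fin 2) ℝ → ℝ) : Prop :=
  Polyconvex2 (fun F => f (symPart F))

noncomputable instance : NormedAddCommGroup (Matrix (Fin 2) (Fin 2) ℝ) :=
  Matrix.normedAddCommGroup

noncomputable instance : NormedSpace ℝ (Matrix (Fin 2) (Fin 2) ℝ) :=
  Matrix.normedSpace

lemma exists_subgradient {E : Type*} [NormedAddCommGroup E] [NormedSpace ℝ E]
    [FiniteDimensional ℝ E] (G : E → ℝ) (hG : ConvexOn ℝ Set.univ G) (x : E) :
    ∃ φ : E →ₗ[ℝ] ℝ, ∀ y, G x + φ (y - x) ≤ G y := by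
  have hcont : Continuous G := by
    have := ConvexOn.continuousOn isOpen_univ hG
    rw [continuousOn_univ] at this; exact this
  set S : Set (E × ℝ) := {p : E × ℝ | G p.1 < p.2} with hS
  have hconv : Convex ℝ S := by
    have := hG.convex_strict_epigraph
    convert this using 1
    ext p; simp [hS]
  have hopen : IsOpen S := isOpen_lt (hcont.comp continuous_fst) continuous_snd
  have hx : (x, G x) ∉ S := by simp [hS]
  obtain ⟨l, hl⟩ := geometric_hahn_banach_open_point hconv hopen hx
  set c : ℝ := l (0, 1) with hc
  set ψ : E →ₗ[ℝ] ℝ := l.toLinearMap.comp (LinearMap.inl ℝ E ℝ) with hψ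
  have hdecomp : ∀ (y : E) (r : ℝ), l (y, r) = ψ y + r * c := by
    intro y r
    have h0 : (y, r) = (y, (0:ℝ)) + r • ((0:E), (1:ℝ)) := by simp
    rw [h0, map_add, l.map_smul]
    simp [hψ, hc, smul_eq_mul]
  have hcneg : c < 0 := by
    have h1 : ((x, G x + 1) : E × ℝ) ∈ S := by simp [hS]
    have := hl _ h1
    rw [hdecomp, hdecomp] at this
    nlinarith
  have key : ∀ y, ψ y + G y * c ≤ ψ x + G x * c := by
    intro y
    by_contra h
    push_neg at h
    set δ : ℝ := (ψ y + G y * c - (ψ x + G x * c)) / (-2 * c) with hδ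
    have hδpos : 0 < δ := div_pos (by linarith) (by linarith)
    have hmem : ((y, G y + δ) : E × ℝ) ∈ S := by simp [hS, hδpos]
    have h2 := hl _ hmem
    rw [hdecomp, hdecomp] at h2
    have h3 : δ * (-2 * c) = ψ y + G y * c - (ψ x + G x * c) :=
      div_mul_cancel₀ _ (by intro hcc; nlinarith)
    nlinarith
  refine ⟨(-c)⁻¹ • ψ, fun y => ?_⟩
  have hy := key y
  have hcpos : 0 < -c := by linarith
  have h4 : ((-c)⁻¹ • ψ) (y - x) = (-c)⁻¹ * (ψ y - ψ x) := by
    simp [map_sub, smul_eq_mul, mul_sub]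
  rw [h4]
  have h5 : ψ y - ψ x ≤ (G y - G x) * (-c) := by nlinarith
  have h6 : (-c)⁻¹ * (ψ y - ψ x) ≤ G y - G x := by
    rw [inv_mul_le_iff₀ hcpos]
    calc ψ y - ψ x ≤ (G y - G x) * (-c) := h5
    _ = -c * (G y - G x) := by ring
  linarith

def J2 : Matrix (Fin 2) (Fin 2) ℝ := !![0,-1;1,0]

lemma symPart_isSymm (F : Matrix (Fin 2) (Fin 2) ℝ) : (symPart F).IsSymm := by
  show (symPart F)ᵀ = symPart F
  unfold symPart
  rw [transpose_smul, transpose_add, transpose_transpose, add_comm]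

lemma symPart_of_isSymm {ε : Matrix (Fin 2) (Fin 2) ℝ} (h : ε.IsSymm) : symPart ε = ε := by
  have h' : εᵀ = ε := h
  unfold symPart
  rw [h', ← two_smul ℝ ε, smul_smul]
  norm_num

lemma symPart_add_smul_J {ε : Matrix (Fin 2) (Fin 2) ℝ} (hε : ε.IsSymm) (a : ℝ) :
    symPart (ε + a • J2) = ε := by
  have h' : εᵀ = ε := hε
  unfold symPart
  rw [transpose_add, transpose_smul, h']
  have hJ : J2ᵀ = -J2 := by
    ext i j; fin_cases i <;> fin_cases j <;> simp [J2]
  rw [hJ, smul_neg]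
  have : ε + a • J2 + (ε + -(a • J2)) = (2:ℝ) • ε := by
    rw [two_smul]; abel
  rw [this, smul_smul]; norm_num

lemma det_add_smul_J {ε : Matrix (Fin 2) (Fin 2) ℝ} (hε : ε.IsSymm) (a : ℝ) :
    (ε + a • J2).det = ε.det + a ^ 2 := by
  have h01 : ε 0 1 = ε 1 0 := (hε.apply 1 0)
  simp [Matrix.det_fin_two, Matrix.add_apply, Matrix.smul_apply, J2, smul_eq_mul, h01]
  ring

lemma convex_slab : Convex ℝ {p : Matrix (Fin 2) (Fin 2) ℝ × ℝ | p.1.IsSymm} := by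
  intro p hp q hq a b ha hb hab
  have hp' : p.1ᵀ = p.1 := hp
  have hq' : q.1ᵀ = q.1 := hq
  show ((a • p + b • q).1)ᵀ = (a • p + b • q).1
  simp only [Prod.fst_add, Prod.smul_fst, transpose_add, transpose_smul, hp', hq']

lemma det_symPart (F : Matrix (Fin 2) (Fin 2) ℝ) :
    F.det - ((F 1 0 - F 0 1) / 2) ^ 2 = (symPart F).det := by
  simp [Matrix.det_fin_two, symPart, Matrix.add_apply, Matrix.smul_apply,
    Matrix.transpose_apply, smul_eq_mul]
  ring

/-- Characterization of symmetric polyconvexity in 2d. -/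
theorem symmetric_polyconvexity_char_2d (f : Matrix (Fin 2) (Fin 2) ℝ → ℝ) :
    SymPolyconvex2 f ↔
      ∃ g : Matrix (Fin 2) (Fin 2) ℝ × ℝ → ℝ,
        ConvexOn ℝ {p : Matrix (Fin 2) (Fin 2) ℝ × ℝ | p.1.IsSymm} g ∧
        (∀ ε : Matrix (Fin 2) (Fin 2) ℝ, ε.IsSymm →
          ∀ t₁ t₂ : ℝ, t₁ ≤ t₂ → g (ε, t₂) ≤ g (ε, t₁)) ∧
        (∀ ε : Matrix (Fin 2) (Fin 2) ℝ, ε.IsSymm → f ε = g (ε, ε.det)) := by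
  constructor
  · rintro ⟨G, hGconv, hGf⟩
    have hfG : ∀ ε : Matrix (Fin 2) (Fin 2) ℝ, ε.IsSymm → f ε = G (ε, ε.det) := by
      intro ε hε
      have := hGf ε
      simpa [symPart_of_isSymm hε] using this
    have hsub := fun x : Matrix (Fin 2) (Fin 2) ℝ × ℝ => exists_subgradient G hGconv x
    choose Φ hΦ using hsub
    set L : Matrix (Fin 2) (Fin 2) ℝ → Matrix (Fin 2) (Fin 2) ℝ × ℝ → ℝ :=
      fun ε p => G (ε, ε.det) + Φ (ε, ε.det) (p - (ε, ε.det)) with hL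
    have hLleG : ∀ ε p, L ε p ≤ G p := fun ε p => hΦ (ε, ε.det) p
    -- the coefficient of t is nonpositive at symmetric points
    have hbneg : ∀ ε : Matrix (Fin 2) (Fin 2) ℝ, ε.IsSymm →
        Φ (ε, ε.det) ((0 : Matrix (Fin 2) (Fin 2) ℝ), (1:ℝ)) ≤ 0 := by
      intro ε hε
      set x : Matrix (Fin 2) (Fin 2) ℝ × ℝ := (ε, ε.det) with hx
      set cJ : ℝ := Φ x (J2, (0:ℝ)) with hcJ
      set b : ℝ := Φ x ((0 : Matrix (Fin 2) (Fin 2) ℝ), (1:ℝ)) with hb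
      have hkey : ∀ a : ℝ, a * cJ + a ^ 2 * b ≤ 0 := by
        intro a
        have h1 := hΦ x (ε + a • J2, (ε + a • J2).det)
        have h2 : G (ε + a • J2, (ε + a • J2).det) = G x := by
          have h2' := hGf (ε + a • J2)
          simp only [symPart_add_smul_J hε a] at h2'
          rw [← h2', hfG ε hε]
        rw [h2] at h1
        have h3 : ((ε + a • J2, (ε + a • J2).det) : Matrix (Fin 2) (Fin 2) ℝ × ℝ) - x =
            a • (J2, (0:ℝ)) + (a ^ 2) • ((0 : Matrix (Fin 2) (Fin 2) ℝ), (1:ℝ)) := by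
          rw [det_add_smul_J hε a]
          refine Prod.ext ?_ ?_ <;> simp [hx, smul_eq_mul]
        rw [h3, map_add, _root_.map_smul, _root_.map_smul, smul_eq_mul, smul_eq_mul, ← hcJ, ← hb] at h1
        linarith
      by_contra hbpos
      push_neg at hbpos
      have ha := hkey ((|cJ| + 1) / b)
      have hapos : 0 < (|cJ| + 1) / b := div_pos (by positivity) hbpos
      have hab : (|cJ| + 1) / b * b = |cJ| + 1 := div_mul_cancel₀ _ (ne_of_gt hbpos)
      nlinarith [le_abs_self cJ, neg_abs_le cJ, abs_nonneg cJ]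
    have hne : Nonempty {m : Matrix (Fin 2) (Fin 2) ℝ // m.IsSymm} :=
      ⟨⟨0, Matrix.isSymm_zero⟩⟩
    set g : Matrix (Fin 2) (Fin 2) ℝ × ℝ → ℝ :=
      fun p => ⨆ σ : {m : Matrix (Fin 2) (Fin 2) ℝ // m.IsSymm}, L σ.1 p with hg
    have hbdd : ∀ p, BddAbove (Set.range fun σ : {m : Matrix (Fin 2) (Fin 2) ℝ // m.IsSymm} =>
        L σ.1 p) := by
      intro p
      exact ⟨G p, by rintro _ ⟨σ, rfl⟩; exact hLleG _ _⟩
    have haff : ∀ (ε : Matrix (Fin 2) (Fin 2) ℝ) (p q : Matrix (Fin 2) (Fin 2) ℝ × ℝ)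
        (a b : ℝ), a + b = 1 → L ε (a • p + b • q) = a * L ε p + b * L ε q := by
      intro ε p q a b hab
      set x : Matrix (Fin 2) (Fin 2) ℝ × ℝ := (ε, ε.det)
      have harg : a • p + b • q - x = a • (p - x) + b • (q - x) := by
        have h0 : a • (p - x) + b • (q - x) = a • p + b • q - (a + b) • x := by
          rw [smul_sub, smul_sub, add_smul]; abel
        rw [h0, hab, one_smul]
      show G x + Φ x (a • p + b • q - x) = a * (G x + Φ x (p - x)) + b * (G x + Φ x (q - x))
      rw [harg, map_add, _root_.map_smul, _root_.map_smul, smul_eq_mul, smul_eq_mul]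
      have : a * G x + b * G x = G x := by rw [← add_mul, hab, one_mul]
      linarith
    refine ⟨g, ⟨convex_slab, ?_⟩, ?_, ?_⟩
    · intro p _ q _ a b ha hb hab
      apply ciSup_le
      intro σ
      rw [haff σ.1 p q a b hab]
      have h1 : L σ.1 p ≤ g p := le_ciSup (hbdd p) σ
      have h2 : L σ.1 q ≤ g q := le_ciSup (hbdd q) σ
      simp only [smul_eq_mul]
      exact add_le_add (mul_le_mul_of_nonneg_left h1 ha) (mul_le_mul_of_nonneg_left h2 hb)
    · intro ε hε t₁ t₂ ht
      apply ciSup_le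
      intro σ
      have hstep : L σ.1 (ε, t₂) ≤ L σ.1 (ε, t₁) := by
        set x : Matrix (Fin 2) (Fin 2) ℝ × ℝ := (σ.1, σ.1.det)
        show G x + Φ x ((ε, t₂) - x) ≤ G x + Φ x ((ε, t₁) - x)
        have harg : ((ε, t₂) : Matrix (Fin 2) (Fin 2) ℝ × ℝ) - x =
            ((ε, t₁) - x) + (t₂ - t₁) • ((0 : Matrix (Fin 2) (Fin 2) ℝ), (1:ℝ)) := by
          refine Prod.ext ?_ ?_ <;> simp [smul_eq_mul] <;> ring
        rw [harg, map_add, _root_.map_smul, smul_eq_mul]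
        have hmb := hbneg σ.1 σ.2
        nlinarith
      exact hstep.trans (le_ciSup (hbdd _) σ)
    · intro ε hε
      apply le_antisymm
      · have h1 : L ε (ε, ε.det) ≤ g (ε, ε.det) := le_ciSup (hbdd (ε, ε.det)) ⟨ε, hε⟩
        have h2 : L ε (ε, ε.det) = f ε := by
          show G (ε, ε.det) + Φ (ε, ε.det) ((ε, ε.det) - (ε, ε.det)) = f ε
          rw [sub_self, map_zero, add_zero, ← hfG ε hε]
        rw [← h2]; exact h1
      · apply ciSup_le
        intro σ
        exact (hLleG σ.1 (ε, ε.det)).trans_eq (hfG ε hε).symm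
  · rintro ⟨g, hgconv, hgmono, hfg⟩
    set G : Matrix (Fin 2) (Fin 2) ℝ × ℝ → ℝ :=
      fun p => g (symPart p.1, p.2 - ((p.1 1 0 - p.1 0 1) / 2) ^ 2) with hG
    refine ⟨G, ⟨convex_univ, ?_⟩, ?_⟩
    · intro p _ q _ a b ha hb hab
      set αp : ℝ := (p.1 1 0 - p.1 0 1) / 2 with hαp
      set αq : ℝ := (q.1 1 0 - q.1 0 1) / 2 with hαq
      have hsymc : symPart ((a • p + b • q).1) = a • symPart p.1 + b • symPart q.1 := by
        ext i j
        simp [symPart, Matrix.add_apply, Matrix.smul_apply, Matrix.transpose_apply,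
          Prod.fst_add, Prod.smul_fst, smul_eq_mul]
        ring
      have hαc : (((a • p + b • q).1 1 0 - (a • p + b • q).1 0 1) / 2) = a * αp + b * αq := by
        simp [Prod.fst_add, Prod.smul_fst, Matrix.add_apply, Matrix.smul_apply,
          smul_eq_mul, hαp, hαq]
        ring
      have hsq : (a * αp + b * αq) ^ 2 ≤ a * αp ^ 2 + b * αq ^ 2 := by
        nlinarith [sq_nonneg (αp - αq), mul_nonneg ha hb]
      set P : Matrix (Fin 2) (Fin 2) ℝ × ℝ := (symPart p.1, p.2 - αp ^ 2) with hP
      set Q : Matrix (Fin 2) (Fin 2) ℝ × ℝ := (symPart q.1, q.2 - αq ^ 2) with hQ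
      have hPmem : P ∈ {x : Matrix (Fin 2) (Fin 2) ℝ × ℝ | x.1.IsSymm} := symPart_isSymm p.1
      have hQmem : Q ∈ {x : Matrix (Fin 2) (Fin 2) ℝ × ℝ | x.1.IsSymm} := symPart_isSymm q.1
      have h1 := hgconv.2 hPmem hQmem ha hb hab
      have hcombmem : (a • symPart p.1 + b • symPart q.1).IsSymm := by
        have := convex_slab hPmem hQmem ha hb hab
        simpa [Prod.fst_add, Prod.smul_fst, hP, hQ] using this
      have hcomb : a • P + b • Q =
          (a • symPart p.1 + b • symPart q.1, a * (p.2 - αp ^ 2) + b * (q.2 - αq ^ 2)) := by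
        refine Prod.ext ?_ ?_ <;> simp [hP, hQ, smul_eq_mul]
      rw [hcomb] at h1
      have h2 : g (a • symPart p.1 + b • symPart q.1,
            a • p.2 + b • q.2 - (a * αp + b * αq) ^ 2) ≤
          g (a • symPart p.1 + b • symPart q.1,
            a * (p.2 - αp ^ 2) + b * (q.2 - αq ^ 2)) := by
        apply hgmono _ hcombmem
        simp only [smul_eq_mul]
        nlinarith
      have hGc : G (a • p + b • q) = g (a • symPart p.1 + b • symPart q.1,
          a • p.2 + b • q.2 - (a * αp + b * αq) ^ 2) := by
        rw [hG]
        simp only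
        rw [hsymc, hαc]
        rfl
      rw [hGc]
      calc g (a • symPart p.1 + b • symPart q.1,
            a • p.2 + b • q.2 - (a * αp + b * αq) ^ 2)
          ≤ g (a • symPart p.1 + b • symPart q.1,
            a * (p.2 - αp ^ 2) + b * (q.2 - αq ^ 2)) := h2
        _ ≤ a • g P + b • g Q := h1
        _ = a • G p + b • G q := by rfl
    · intro F
      show f (symPart F) = G (F, F.det)
      rw [hG]
      simp only
      rw [det_symPart F]
      exact hfg (symPart F) (symPart_isSymm F)
end

section
/- Let h : ℝ → ℝ and define f : S^{2×2} → ℝ by f(ε) = h(det ε). Then f is symmetric polyconvex if and only if h is convex and non-increasing. -/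
open Matrix

lemma symPart_det (F : Matrix (Fin 2) (Fin 2) ℝ) :
    (symPart F).det = F.det - ((F 0 1 - F 1 0) / 2) ^ 2 := by
  simp [symPart, Matrix.det_fin_two, Matrix.smul_apply, Matrix.add_apply,
    Matrix.transpose_apply, smul_eq_mul]
  ring

/-- `ε ↦ h (det ε)` is symmetric polyconvex iff `h` is convex and non-increasing. -/
theorem symmetric_polyconvex_det_2d (h : ℝ → ℝ) :
    SymPolyconvex2 (fun ε => h ε.det) ↔
      (ConvexOn ℝ Set.univ h ∧ ∀ s t : ℝ, s ≤ t → h t ≤ h s) := by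
  constructor
  · rintro ⟨G, hG, hFG⟩
    have key : ∀ x : ℝ, h x = G (!![x, 0; 0, 1], x) := by
      intro x
      have := hFG !![x, 0; 0, 1]
      simp only [symPart_det, Matrix.det_fin_two_of] at this
      norm_num at this
      convert this using 3 <;> norm_num
    constructor
    · refine ⟨convex_univ, ?_⟩
      intro x _ y _ a b ha hb hab
      have hm : a • ((!![x,0;0,1] : Matrix (Fin 2) (Fin 2) ℝ), x)
          + b • ((!![y,0;0,1] : Matrix (Fin 2) (Fin 2) ℝ), y)
          = ((!![a*x+b*y,0;0,1] : Matrix (Fin 2) (Fin 2) ℝ), a*x+b*y) := by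
        ext i j
        · fin_cases i <;> fin_cases j <;>
            simp [Matrix.add_apply, Matrix.smul_apply, smul_eq_mul] <;> linarith
        · simp [smul_eq_mul]
      have := hG.2 (Set.mem_univ ((!![x,0;0,1] : Matrix (Fin 2) (Fin 2) ℝ), x))
        (Set.mem_univ ((!![y,0;0,1] : Matrix (Fin 2) (Fin 2) ℝ), y)) ha hb hab
      rw [hm] at this
      simpa [smul_eq_mul, ← key] using this
    · intro s t hst
      set c := Real.sqrt (t - s) with hc
      have hc2 : c ^ 2 = t - s := Real.sq_sqrt (by linarith)
      have h1 : h s = G (!![t, 2*c; 0, 1], t) := by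
        have := hFG !![t, 2*c; 0, 1]
        simp only [symPart_det, Matrix.det_fin_two_of] at this
        norm_num at this
        convert this using 2
        nlinarith [hc2]
      have h2 : h s = G (!![t, -(2*c); 0, 1], t) := by
        have := hFG !![t, -(2*c); 0, 1]
        simp only [symPart_det, Matrix.det_fin_two_of] at this
        norm_num at this
        convert this using 2
        nlinarith [hc2]
      have hm : (1/2 : ℝ) • ((!![t, 2*c; 0, 1] : Matrix (Fin 2) (Fin 2) ℝ), t)
          + (1/2 : ℝ) • ((!![t, -(2*c); 0, 1] : Matrix (Fin 2) (Fin 2) ℝ), t)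
          = ((!![t,0;0,1] : Matrix (Fin 2) (Fin 2) ℝ), t) := by
        ext i j
        · fin_cases i <;> fin_cases j <;>
            simp [Matrix.add_apply, Matrix.smul_apply, smul_eq_mul] <;> ring
        · simp; ring
      have := hG.2 (Set.mem_univ ((!![t, 2*c; 0, 1] : Matrix (Fin 2) (Fin 2) ℝ), t))
        (Set.mem_univ ((!![t, -(2*c); 0, 1] : Matrix (Fin 2) (Fin 2) ℝ), t))
        (by norm_num : (0:ℝ) ≤ 1/2) (by norm_num : (0:ℝ) ≤ 1/2) (by norm_num)
      rw [hm] at this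
      rw [key t]
      refine this.trans (le_of_eq ?_)
      rw [← h1, ← h2]
      simp only [smul_eq_mul]
      ring
  · rintro ⟨hconv, hmono⟩
    refine ⟨fun p => h (p.2 - ((p.1 0 1 - p.1 1 0) / 2) ^ 2), ⟨convex_univ, ?_⟩, ?_⟩
    · intro p _ q _ a b ha hb hab
      simp only [Prod.fst_add, Prod.snd_add, Prod.smul_fst, Prod.smul_snd,
        Matrix.add_apply, Matrix.smul_apply, smul_eq_mul]
      set Lp := (p.1 0 1 - p.1 1 0) / 2 with hLp
      set Lq := (q.1 0 1 - q.1 1 0) / 2 with hLq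
      have harg : (a * p.1 0 1 + b * q.1 0 1 - (a * p.1 1 0 + b * q.1 1 0)) / 2
          = a * Lp + b * Lq := by rw [hLp, hLq]; ring
      rw [harg]
      have hφ : a * (p.2 - Lp ^ 2) + b * (q.2 - Lq ^ 2)
          ≤ a * p.2 + b * q.2 - (a * Lp + b * Lq) ^ 2 := by
        nlinarith [sq_nonneg (Lp - Lq), mul_nonneg ha hb]
      calc h (a * p.2 + b * q.2 - (a * Lp + b * Lq) ^ 2)
          ≤ h (a * (p.2 - Lp ^ 2) + b * (q.2 - Lq ^ 2)) := hmono _ _ hφ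
        _ ≤ a * h (p.2 - Lp ^ 2) + b * h (q.2 - Lq ^ 2) := by
            have := hconv.2 (Set.mem_univ (p.2 - Lp ^ 2)) (Set.mem_univ (q.2 - Lq ^ 2))
              ha hb hab
            simpa [smul_eq_mul] using this
    · intro F
      simp only [symPart_det]
end

section
/- Let g : S^{2×2} × ℝ → ℝ be convex and h : ℝ → ℝ be such that g(ε, det ε) = h(det ε) for all ε ∈ S^{2×2}. Then g is constant in its first variable, i.e., g(ε, t) = g(0, t) for all ε ∈ S^{2×2} and t ∈ ℝ, and h(t) = g(0, t) for every t ∈ ℝ. -/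
open Matrix

/-- Roots of a monic quadratic with negative constant term: one positive, one negative. -/
lemma exists_pos_neg_roots (β γ : ℝ) (hγ : γ < 0) :
    ∃ p q : ℝ, q < 0 ∧ 0 < p ∧ p ^ 2 + β * p + γ = 0 ∧ q ^ 2 + β * q + γ = 0 := by
  have hd : (0:ℝ) ≤ β ^ 2 - 4 * γ := by nlinarith
  set s := Real.sqrt (β ^ 2 - 4 * γ) with hsdef
  have hs : s ^ 2 = β ^ 2 - 4 * γ := Real.sq_sqrt hd
  have hs0 : 0 ≤ s := Real.sqrt_nonneg _
  have h1 : β < s := by nlinarith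
  have h2 : -β < s := by nlinarith
  refine ⟨(-β + s) / 2, (-β - s) / 2, by linarith, by linarith, ?_, ?_⟩
  · linear_combination hs / 4
  · linear_combination hs / 4

/-- If a convex function `g` on `S^{2×2} × ℝ` satisfies `g (ε, det ε) = h (det ε)` for all
symmetric `ε`, then `g` is constant in its first variable and `h t = g (0, t)`. -/
theorem convex_g_det_eq_h_det_2d (g : Matrix (Fin 2) (Fin 2) ℝ × ℝ → ℝ)
    (hg : ConvexOn ℝ {p : Matrix (Fin 2) (Fin 2) ℝ × ℝ | p.1.IsSymm} g)
    (h : ℝ → ℝ)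
    (hgh : ∀ ε : Matrix (Fin 2) (Fin 2) ℝ, ε.IsSymm → g (ε, ε.det) = h ε.det) :
    (∀ ε : Matrix (Fin 2) (Fin 2) ℝ, ε.IsSymm → ∀ t : ℝ, g (ε, t) = g (0, t)) ∧
      (∀ t : ℝ, h t = g (0, t)) := by
  -- key step: if `(ε, t)` is between two symmetric matrices of determinant `t`,
  -- then `g (ε, t) ≤ h t`.
  have key : ∀ ε η : Matrix (Fin 2) (Fin 2) ℝ, ε.IsSymm → η.IsSymm → ∀ t p q : ℝ,
      q < 0 → 0 < p → (ε + p • η).det = t → (ε + q • η).det = t → g (ε, t) ≤ h t := by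
    intro ε η hε hη t p q hq hp hdp hdq
    have hpq : 0 < p - q := by linarith
    have hμ : (0:ℝ) ≤ -q / (p - q) := div_nonneg (by linarith) hpq.le
    have hν : (0:ℝ) ≤ p / (p - q) := div_nonneg hp.le hpq.le
    have hμν : -q / (p - q) + p / (p - q) = 1 := by field_simp; ring
    have hsym : ∀ c : ℝ, (ε + c • η).IsSymm := by
      intro c
      unfold Matrix.IsSymm
      rw [Matrix.transpose_add, Matrix.transpose_smul, hε, hη]
    have hmem1 : ((ε + p • η, t) : Matrix (Fin 2) (Fin 2) ℝ × ℝ) ∈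
        {p : Matrix (Fin 2) (Fin 2) ℝ × ℝ | p.1.IsSymm} := hsym p
    have hmem2 : ((ε + q • η, t) : Matrix (Fin 2) (Fin 2) ℝ × ℝ) ∈
        {p : Matrix (Fin 2) (Fin 2) ℝ × ℝ | p.1.IsSymm} := hsym q
    have hconv := hg.2 hmem1 hmem2 hμ hν hμν
    have hpt : (-q / (p - q)) • ((ε + p • η, t) : Matrix (Fin 2) (Fin 2) ℝ × ℝ)
        + (p / (p - q)) • ((ε + q • η, t) : Matrix (Fin 2) (Fin 2) ℝ × ℝ) = (ε, t) := by
      have hc1 : (-q / (p - q)) • (ε + p • η) + (p / (p - q)) • (ε + q • η) = ε := by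
        match_scalars <;> (field_simp; try ring)
      have hc2 : (-q / (p - q)) * t + (p / (p - q)) * t = t := by
        field_simp; ring
      simp only [Prod.smul_mk, Prod.mk_add_mk, smul_eq_mul]
      exact Prod.ext hc1 hc2
    rw [hpt] at hconv
    have h1 : g (ε + p • η, t) = h t := by
      have := hgh (ε + p • η) (hsym p); rwa [hdp] at this
    have h2 : g (ε + q • η, t) = h t := by
      have := hgh (ε + q • η) (hsym q); rwa [hdq] at this
    rw [h1, h2] at hconv
    simp only [smul_eq_mul] at hconv
    calc g (ε, t) ≤ -q / (p - q) * h t + p / (p - q) * h t := hconv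
      _ = 1 * h t := by rw [← add_mul, hμν]
      _ = h t := one_mul _
  -- upper bound
  have upper : ∀ ε : Matrix (Fin 2) (Fin 2) ℝ, ε.IsSymm → ∀ t : ℝ, g (ε, t) ≤ h t := by
    intro ε hε t
    have hx : ε 1 0 = ε 0 1 := by
      conv_lhs => rw [← hε]
      rfl
    rcases lt_trichotomy ε.det t with hlt | heqd | hgt
    · obtain ⟨p, q, hq, hp, hep, heq⟩ :=
        exists_pos_neg_roots (ε 0 0 + ε 1 1) (ε.det - t) (by linarith)
      rw [Matrix.det_fin_two] at hep heq
      refine key ε 1 hε Matrix.isSymm_one t p q hq hp ?_ ?_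
      · rw [Matrix.det_fin_two]
        simp only [Matrix.add_apply, Matrix.smul_apply, Matrix.one_apply, smul_eq_mul]
        norm_num
        linear_combination hep
      · rw [Matrix.det_fin_two]
        simp only [Matrix.add_apply, Matrix.smul_apply, Matrix.one_apply, smul_eq_mul]
        norm_num
        linear_combination heq
    · have := hgh ε hε
      rw [heqd] at this
      rw [this]
    · obtain ⟨p, q, hq, hp, hep, heq⟩ :=
        exists_pos_neg_roots (2 * ε 0 1) (t - ε.det) (by linarith)
      rw [Matrix.det_fin_two] at hep heq
      have hsw : (!![0, 1; 1, 0] : Matrix (Fin 2) (Fin 2) ℝ).IsSymm := by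
        unfold Matrix.IsSymm
        ext i j
        fin_cases i <;> fin_cases j <;> simp
      have e00 : (!![0, 1; 1, 0] : Matrix (Fin 2) (Fin 2) ℝ) 0 0 = 0 := by norm_num
      have e01 : (!![0, 1; 1, 0] : Matrix (Fin 2) (Fin 2) ℝ) 0 1 = 1 := by norm_num
      have e10 : (!![0, 1; 1, 0] : Matrix (Fin 2) (Fin 2) ℝ) 1 0 = 1 := by norm_num
      have e11 : (!![0, 1; 1, 0] : Matrix (Fin 2) (Fin 2) ℝ) 1 1 = 0 := by norm_num
      refine key ε !![0, 1; 1, 0] hε hsw t p q hq hp ?_ ?_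
      · rw [Matrix.det_fin_two]
        simp only [Matrix.add_apply, Matrix.smul_apply, smul_eq_mul, e00, e01, e10, e11]
        linear_combination -hep - p * hx
      · rw [Matrix.det_fin_two]
        simp only [Matrix.add_apply, Matrix.smul_apply, smul_eq_mul, e00, e01, e10, e11]
        linear_combination -heq - q * hx
  -- main equality
  have main : ∀ ε : Matrix (Fin 2) (Fin 2) ℝ, ε.IsSymm → ∀ t : ℝ, g (ε, t) = h t := by
    intro ε hε t
    refine le_antisymm (upper ε hε t) ?_
    set σ : Matrix (Fin 2) (Fin 2) ℝ := !![t, 0; 0, 1] with hσdef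
    have hσ : σ.IsSymm := by
      unfold Matrix.IsSymm
      ext i j
      fin_cases i <;> fin_cases j <;> simp [hσdef]
    have hσd : σ.det = t := by
      rw [hσdef, Matrix.det_fin_two_of]; ring
    set ρ : Matrix (Fin 2) (Fin 2) ℝ := σ + σ - ε with hρdef
    have hρ : ρ.IsSymm := by
      unfold Matrix.IsSymm
      rw [hρdef, Matrix.transpose_sub, Matrix.transpose_add, hσ, hε]
    have hmem1 : ((ε, t) : Matrix (Fin 2) (Fin 2) ℝ × ℝ) ∈
        {p : Matrix (Fin 2) (Fin 2) ℝ × ℝ | p.1.IsSymm} := hε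
    have hmem2 : ((ρ, t) : Matrix (Fin 2) (Fin 2) ℝ × ℝ) ∈
        {p : Matrix (Fin 2) (Fin 2) ℝ × ℝ | p.1.IsSymm} := hρ
    have hconv := hg.2 hmem1 hmem2 (by norm_num : (0:ℝ) ≤ 1/2) (by norm_num : (0:ℝ) ≤ 1/2)
      (by norm_num : (1:ℝ)/2 + 1/2 = 1)
    have hpt : ((1:ℝ)/2) • ((ε, t) : Matrix (Fin 2) (Fin 2) ℝ × ℝ)
        + ((1:ℝ)/2) • ((ρ, t) : Matrix (Fin 2) (Fin 2) ℝ × ℝ) = (σ, t) := by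
      have hc1 : ((1:ℝ)/2) • ε + ((1:ℝ)/2) • ρ = σ := by
        rw [hρdef]; module
      have hc2 : ((1:ℝ)/2) * t + ((1:ℝ)/2) * t = t := by ring
      simp only [Prod.smul_mk, Prod.mk_add_mk, smul_eq_mul]
      exact Prod.ext hc1 hc2
    rw [hpt] at hconv
    have hσg : g (σ, t) = h t := by
      have := hgh σ hσ; rwa [hσd] at this
    have hρle := upper ρ hρ t
    rw [hσg] at hconv
    simp only [smul_eq_mul] at hconv
    linarith
  have h0 : (0 : Matrix (Fin 2) (Fin 2) ℝ).IsSymm := Matrix.isSymm_zero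
  refine ⟨fun ε hε t => ?_, fun t => ?_⟩
  · rw [main ε hε t, main 0 h0 t]
  · rw [main 0 h0 t]
end

section
/- Let f : S^{2×2} → ℝ be a quadratic form. Then the following three statements are equivalent: (i) f is symmetric polyconvex; (ii) there exist α ≥ 0 and a convex quadratic form h : S^{2×2} → ℝ such that f(ε) = h(ε) − α·det ε for all ε ∈ S^{2×2}; (iii) there exists α ≥ 0 such that f(ε) + α·det ε ≥ 0 for all ε ∈ S^{2×2}. -/
open Matrix

/-- `f` is a quadratic form on `S^{2×2}`: `f ε = B ε ε` on symmetric matrices for some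
symmetric bilinear form `B`. -/
def IsSymQuadForm2 (f : Matrix (Fin 2) (Fin 2) ℝ → ℝ) : Prop :=
  ∃ B : Matrix (Fin 2) (Fin 2) ℝ →ₗ[ℝ] Matrix (Fin 2) (Fin 2) ℝ →ₗ[ℝ] ℝ,
    (∀ X Y, B X Y = B Y X) ∧
    ∀ ε : Matrix (Fin 2) (Fin 2) ℝ, ε.IsSymm → f ε = B ε ε

/-! ### Auxiliary lemmas -/

lemma symPart_apply (F : Matrix (Fin 2) (Fin 2) ℝ) (i j : Fin 2) :
    symPart F i j = (F i j + F j i) / 2 := by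
  simp [symPart, Matrix.add_apply]; ring

lemma symPart_lin (a b : ℝ) (X Y : Matrix (Fin 2) (Fin 2) ℝ) :
    symPart (a • X + b • Y) = a • symPart X + b • symPart Y := by
  ext i j; simp [symPart_apply, Matrix.add_apply]; ring

lemma disc (F : Matrix (Fin 2) (Fin 2) ℝ) :
    F.det = (symPart F).det + ((F 0 1 - F 1 0) / 2) ^ 2 := by
  simp [Matrix.det_fin_two, symPart_apply]; ring

/-- The determinant as a symmetric bilinear form. -/
noncomputable def detB : Matrix (Fin 2) (Fin 2) ℝ →ₗ[ℝ] Matrix (Fin 2) (Fin 2) ℝ →ₗ[ℝ] ℝ :=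
  LinearMap.mk₂ ℝ
    (fun X Y => (X 0 0 * Y 1 1 + X 1 1 * Y 0 0 - X 0 1 * Y 1 0 - X 1 0 * Y 0 1) / 2)
    (by intro X X' Y; simp [Matrix.add_apply]; ring)
    (by intro c X Y; simp [Matrix.smul_apply]; ring)
    (by intro X Y Y'; simp [Matrix.add_apply]; ring)
    (by intro c X Y; simp [Matrix.smul_apply]; ring)

lemma detB_apply (X Y : Matrix (Fin 2) (Fin 2) ℝ) :
    detB X Y = (X 0 0 * Y 1 1 + X 1 1 * Y 0 0 - X 0 1 * Y 1 0 - X 1 0 * Y 0 1) / 2 := rfl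

lemma detB_symm (X Y : Matrix (Fin 2) (Fin 2) ℝ) : detB X Y = detB Y X := by
  rw [detB_apply, detB_apply]; ring

lemma detB_self (X : Matrix (Fin 2) (Fin 2) ℝ) : detB X X = X.det := by
  rw [detB_apply, Matrix.det_fin_two]; ring

/-- (ii) implies (i). -/
lemma aux_L1 (f : Matrix (Fin 2) (Fin 2) ℝ → ℝ) (α : ℝ) (hα : 0 ≤ α)
    (h : Matrix (Fin 2) (Fin 2) ℝ → ℝ)
    (hh : ConvexOn ℝ {ε : Matrix (Fin 2) (Fin 2) ℝ | ε.IsSymm} h)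
    (heq : ∀ ε : Matrix (Fin 2) (Fin 2) ℝ, ε.IsSymm → f ε = h ε - α * ε.det) :
    SymPolyconvex2 f := by
  refine ⟨fun p => h (symPart p.1) + α * ((p.1 0 1 - p.1 1 0) / 2) ^ 2 - α * p.2,
    ⟨convex_univ, ?_⟩, ?_⟩
  · rintro ⟨X, x⟩ - ⟨Y, y⟩ - a b ha hb hab
    simp only [Prod.smul_mk, Prod.mk_add_mk, smul_eq_mul]
    have h2 : h (a • symPart X + b • symPart Y) ≤ a * h (symPart X) + b * h (symPart Y) :=
      hh.2 (symPart_isSymm X) (symPart_isSymm Y) ha hb hab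
    have e : ((a • X + b • Y) 0 1 - (a • X + b • Y) 1 0) / 2
        = a * ((X 0 1 - X 1 0) / 2) + b * ((Y 0 1 - Y 1 0) / 2) := by
      simp [Matrix.add_apply]; ring
    rw [symPart_lin, e]
    have sq : (a * ((X 0 1 - X 1 0) / 2) + b * ((Y 0 1 - Y 1 0) / 2)) ^ 2
        ≤ a * ((X 0 1 - X 1 0) / 2) ^ 2 + b * ((Y 0 1 - Y 1 0) / 2) ^ 2 := by
      have hb' : b = 1 - a := by linarith
      subst hb'
      nlinarith [mul_nonneg (mul_nonneg ha hb)
        (sq_nonneg ((X 0 1 - X 1 0) / 2 - (Y 0 1 - Y 1 0) / 2))]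
    nlinarith [mul_le_mul_of_nonneg_left sq hα]
  · intro F
    simp only
    rw [heq (symPart F) (symPart_isSymm F), disc F]
    ring

/-- (i) implies (iii). -/
lemma aux_L2 (f : Matrix (Fin 2) (Fin 2) ℝ → ℝ)
    (B : Matrix (Fin 2) (Fin 2) ℝ →ₗ[ℝ] Matrix (Fin 2) (Fin 2) ℝ →ₗ[ℝ] ℝ)
    (hB : ∀ ε : Matrix (Fin 2) (Fin 2) ℝ, ε.IsSymm → f ε = B ε ε)
    (hpc : SymPolyconvex2 f) :
    ∃ α : ℝ, 0 ≤ α ∧ ∀ ε : Matrix (Fin 2) (Fin 2) ℝ, ε.IsSymm → 0 ≤ f ε + α * ε.det := by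
  obtain ⟨G, hG, hGf⟩ := hpc
  have hf0 : f 0 = 0 := by rw [hB 0 Matrix.isSymm_zero]; simp
  have hGval : ∀ F : Matrix (Fin 2) (Fin 2) ℝ, G (F, F.det) = f (symPart F) :=
    fun F => (hGf F).symm
  have mid : ∀ p q : Matrix (Fin 2) (Fin 2) ℝ × ℝ,
      G ((1/2 : ℝ) • p + (1/2 : ℝ) • q) ≤ 1/2 * G p + 1/2 * G q := by
    intro p q
    simpa using hG.2 (Set.mem_univ p) (Set.mem_univ q) (by norm_num : (0:ℝ) ≤ 1/2)
      (by norm_num : (0:ℝ) ≤ 1/2) (by norm_num : (1:ℝ)/2 + 1/2 = 1)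
  have key1 : ∀ ε : Matrix (Fin 2) (Fin 2) ℝ, ε.IsSymm → G (0, ε.det) ≤ f ε := by
    intro ε hε
    have hdet : (-ε).det = ε.det := by simp [Matrix.det_fin_two]
    have hpt : (1/2 : ℝ) • ((ε, ε.det) : Matrix (Fin 2) (Fin 2) ℝ × ℝ)
        + (1/2 : ℝ) • ((-ε, (-ε).det) : Matrix (Fin 2) (Fin 2) ℝ × ℝ)
        = ((0, ε.det) : Matrix (Fin 2) (Fin 2) ℝ × ℝ) := by
      rw [hdet, Prod.smul_mk, Prod.smul_mk, Prod.mk_add_mk, Prod.mk.injEq]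
      exact ⟨by module, by simp only [smul_eq_mul]; ring⟩
    have hc := mid (ε, ε.det) (-ε, (-ε).det)
    rw [hpt, hGval, hGval, symPart_of_isSymm hε] at hc
    have hfneg : f (symPart (-ε)) = f ε := by
      rw [symPart_of_isSymm hε.neg, hB (-ε) hε.neg, hB ε hε]; simp
    rw [hfneg] at hc
    linarith
  have key2 : ∀ s : ℝ, 0 ≤ s → G (0, s) ≤ 0 := by
    intro s hs
    set c := Real.sqrt s with hcdef
    have hcc : c * c = s := Real.mul_self_sqrt hs
    set J : Matrix (Fin 2) (Fin 2) ℝ := !![0, c; -c, 0] with hJ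
    have hJdet : J.det = s := by
      rw [Matrix.det_fin_two]
      have e00 : J 0 0 = 0 := rfl
      have e01 : J 0 1 = c := rfl
      have e10 : J 1 0 = -c := rfl
      have e11 : J 1 1 = 0 := rfl
      rw [e00, e01, e10, e11]; nlinarith [hcc]
    have hJdet' : (-J).det = s := by
      rw [show (-J).det = J.det by simp [Matrix.det_fin_two], hJdet]
    have hJsym : symPart J = 0 := by
      ext i j; fin_cases i <;> fin_cases j <;>
        simp [symPart_apply, hJ]
    have hJsym' : symPart (-J) = 0 := by
      ext i j; fin_cases i <;> fin_cases j <;>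
        simp [symPart_apply, hJ]
    have hpt : (1/2 : ℝ) • ((J, J.det) : Matrix (Fin 2) (Fin 2) ℝ × ℝ)
        + (1/2 : ℝ) • ((-J, (-J).det) : Matrix (Fin 2) (Fin 2) ℝ × ℝ)
        = ((0, s) : Matrix (Fin 2) (Fin 2) ℝ × ℝ) := by
      rw [hJdet, hJdet', Prod.smul_mk, Prod.smul_mk, Prod.mk_add_mk, Prod.mk.injEq]
      exact ⟨by module, by simp only [smul_eq_mul]; ring⟩
    have hc2 := mid (J, J.det) (-J, (-J).det)
    rw [hpt, hGval, hGval, hJsym, hJsym', hf0] at hc2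
    linarith
  have e0 : G (0, 0) = 0 := by
    have := hGval 0
    rw [symPart_of_isSymm Matrix.isSymm_zero, hf0] at this
    simpa using this
  have key3 : 0 ≤ G (0, 1) + G (0, -1) := by
    have hpt : (1/2 : ℝ) • ((0, 1) : Matrix (Fin 2) (Fin 2) ℝ × ℝ)
        + (1/2 : ℝ) • ((0, -1) : Matrix (Fin 2) (Fin 2) ℝ × ℝ)
        = ((0, 0) : Matrix (Fin 2) (Fin 2) ℝ × ℝ) := by
      rw [Prod.smul_mk, Prod.smul_mk, Prod.mk_add_mk, Prod.mk.injEq]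
      exact ⟨by module, by simp only [smul_eq_mul]; ring⟩
    have hc2 := mid (0, 1) (0, -1)
    rw [hpt, e0] at hc2
    linarith
  refine ⟨-G (0, 1), by linarith [key2 1 zero_le_one], ?_⟩
  intro ε hε
  rcases lt_trichotomy ε.det 0 with hd | hd | hd
  · set t := Real.sqrt (-ε.det) with ht
    have ht0 : 0 < t := Real.sqrt_pos.mpr (by linarith)
    have ht2 : t ^ 2 = -ε.det := Real.sq_sqrt (by linarith)
    set ε' : Matrix (Fin 2) (Fin 2) ℝ := t⁻¹ • ε with hε'def
    have hε'symm : ε'.IsSymm := hε.smul t⁻¹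
    have hdet' : ε'.det = -1 := by
      rw [hε'def, Matrix.det_smul]
      simp only [Fintype.card_fin]
      rw [inv_pow]
      field_simp
      nlinarith [ht2]
    have hfe : f ε = t ^ 2 * f ε' := by
      have expand : (B (t⁻¹ • ε)) (t⁻¹ • ε) = t⁻¹ * (t⁻¹ * ((B ε) ε)) := by
        simp only [_root_.map_smul, LinearMap.smul_apply, smul_eq_mul]
      rw [hB ε hε, hB ε' hε'symm, hε'def, expand]
      have ht' : t ≠ 0 := ne_of_gt ht0
      field_simp
    have hk := key1 ε' hε'symm
    rw [hdet'] at hk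
    have htp : (0:ℝ) ≤ t ^ 2 := sq_nonneg t
    have h1 : t ^ 2 * G (0, -1) ≤ t ^ 2 * f ε' := mul_le_mul_of_nonneg_left hk htp
    have h2 : 0 ≤ t ^ 2 * (G (0, 1) + G (0, -1)) := mul_nonneg htp key3
    have hdet2 : ε.det = -t ^ 2 := by linarith
    rw [hdet2]
    nlinarith [h1, h2]
  · rw [hd, mul_zero, add_zero]
    have hk := key1 ε hε
    rw [hd] at hk
    linarith [key2 0 le_rfl, hk]
  · set t := Real.sqrt ε.det with ht
    have ht0 : 0 < t := Real.sqrt_pos.mpr hd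
    have ht2 : t ^ 2 = ε.det := Real.sq_sqrt (le_of_lt hd)
    set ε' : Matrix (Fin 2) (Fin 2) ℝ := t⁻¹ • ε with hε'def
    have hε'symm : ε'.IsSymm := hε.smul t⁻¹
    have hdet' : ε'.det = 1 := by
      rw [hε'def, Matrix.det_smul]
      simp only [Fintype.card_fin]
      rw [inv_pow]
      field_simp
      nlinarith [ht2]
    have hfe : f ε = t ^ 2 * f ε' := by
      have expand : (B (t⁻¹ • ε)) (t⁻¹ • ε) = t⁻¹ * (t⁻¹ * ((B ε) ε)) := by
        simp only [_root_.map_smul, LinearMap.smul_apply, smul_eq_mul]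
      rw [hB ε hε, hB ε' hε'symm, hε'def, expand]
      have ht' : t ≠ 0 := ne_of_gt ht0
      field_simp
    have hk := key1 ε' hε'symm
    rw [hdet'] at hk
    have htp : (0:ℝ) ≤ t ^ 2 := sq_nonneg t
    have h1 : t ^ 2 * G (0, 1) ≤ t ^ 2 * f ε' := mul_le_mul_of_nonneg_left hk htp
    have hdet2 : ε.det = t ^ 2 := by linarith
    rw [hdet2]
    nlinarith [h1]

/-- (iii) implies (ii). -/
lemma aux_L3 (f : Matrix (Fin 2) (Fin 2) ℝ → ℝ)
    (B : Matrix (Fin 2) (Fin 2) ℝ →ₗ[ℝ] Matrix (Fin 2) (Fin 2) ℝ →ₗ[ℝ] ℝ)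
    (hBsymm : ∀ X Y, B X Y = B Y X)
    (hB : ∀ ε : Matrix (Fin 2) (Fin 2) ℝ, ε.IsSymm → f ε = B ε ε)
    (α : ℝ)
    (hpos : ∀ ε : Matrix (Fin 2) (Fin 2) ℝ, ε.IsSymm → 0 ≤ f ε + α * ε.det) :
    ∃ h : Matrix (Fin 2) (Fin 2) ℝ → ℝ, IsSymQuadForm2 h ∧
      ConvexOn ℝ {ε : Matrix (Fin 2) (Fin 2) ℝ | ε.IsSymm} h ∧
      ∀ ε : Matrix (Fin 2) (Fin 2) ℝ, ε.IsSymm → f ε = h ε - α * ε.det := by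
  set Q : Matrix (Fin 2) (Fin 2) ℝ →ₗ[ℝ] Matrix (Fin 2) (Fin 2) ℝ →ₗ[ℝ] ℝ := B + α • detB with hQ
  have hQapp : ∀ X Y, Q X Y = B X Y + α * detB X Y := by
    intro X Y; simp [hQ, LinearMap.add_apply, LinearMap.smul_apply, smul_eq_mul]
  have hQsymm : ∀ X Y, Q X Y = Q Y X := by
    intro X Y; rw [hQapp, hQapp, hBsymm, detB_symm]
  have hQval : ∀ ε : Matrix (Fin 2) (Fin 2) ℝ, ε.IsSymm → f ε + α * ε.det = Q ε ε := by
    intro ε hε; rw [hQapp, hB ε hε, detB_self]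
  have hQpos : ∀ ε : Matrix (Fin 2) (Fin 2) ℝ, ε.IsSymm → 0 ≤ Q ε ε := by
    intro ε hε; rw [← hQval ε hε]; exact hpos ε hε
  refine ⟨fun ε => f ε + α * ε.det, ⟨Q, hQsymm, fun ε hε => hQval ε hε⟩, ⟨?_, ?_⟩, ?_⟩
  · intro x hx y hy a b ha hb hab
    exact (hx.smul a).add (hy.smul b)
  · intro x hx y hy a b ha hb hab
    have hx' : (x : Matrix (Fin 2) (Fin 2) ℝ).IsSymm := hx
    have hy' : (y : Matrix (Fin 2) (Fin 2) ℝ).IsSymm := hy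
    have hxy : ((a • x + b • y : Matrix (Fin 2) (Fin 2) ℝ)).IsSymm := (hx'.smul a).add (hy'.smul b)
    simp only [smul_eq_mul]
    rw [hQval _ hxy, hQval _ hx', hQval _ hy']
    have hd := hQpos (x - y) (hx'.sub hy')
    have e : Q (a • x + b • y) (a • x + b • y)
        = a ^ 2 * Q x x + 2 * a * b * Q x y + b ^ 2 * Q y y := by
      simp [map_add, _root_.map_smul, smul_eq_mul, hQsymm y x]; ring
    have e2 : Q (x - y) (x - y) = Q x x - 2 * Q x y + Q y y := by
      simp [map_sub, hQsymm y x]; ring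
    have hb' : b = 1 - a := by linarith
    subst hb'
    nlinarith [mul_nonneg (mul_nonneg ha hb) hd]
  · intro ε hε; ring

/-- Characterization of symmetric polyconvex quadratic forms in 2d. -/
theorem symmetric_polyconvex_quadratic_forms_2d (f : Matrix (Fin 2) (Fin 2) ℝ → ℝ)
    (hf : IsSymQuadForm2 f) :
    (SymPolyconvex2 f ↔
      ∃ α : ℝ, 0 ≤ α ∧ ∃ h : Matrix (Fin 2) (Fin 2) ℝ → ℝ, IsSymQuadForm2 h ∧
        ConvexOn ℝ {ε : Matrix (Fin 2) (Fin 2) ℝ | ε.IsSymm} h ∧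
        ∀ ε : Matrix (Fin 2) (Fin 2) ℝ, ε.IsSymm → f ε = h ε - α * ε.det) ∧
    (SymPolyconvex2 f ↔
      ∃ α : ℝ, 0 ≤ α ∧
        ∀ ε : Matrix (Fin 2) (Fin 2) ℝ, ε.IsSymm → 0 ≤ f ε + α * ε.det) := by
  obtain ⟨B, hBsymm, hB⟩ := hf
  have himpiii : SymPolyconvex2 f →
      ∃ α : ℝ, 0 ≤ α ∧ ∀ ε : Matrix (Fin 2) (Fin 2) ℝ, ε.IsSymm → 0 ≤ f ε + α * ε.det :=
    fun hpc => aux_L2 f B hB hpc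
  have hiiiimpii : (∃ α : ℝ, 0 ≤ α ∧
        ∀ ε : Matrix (Fin 2) (Fin 2) ℝ, ε.IsSymm → 0 ≤ f ε + α * ε.det) →
      ∃ α : ℝ, 0 ≤ α ∧ ∃ h : Matrix (Fin 2) (Fin 2) ℝ → ℝ, IsSymQuadForm2 h ∧
        ConvexOn ℝ {ε : Matrix (Fin 2) (Fin 2) ℝ | ε.IsSymm} h ∧
        ∀ ε : Matrix (Fin 2) (Fin 2) ℝ, ε.IsSymm → f ε = h ε - α * ε.det := by
    rintro ⟨α, hα, hpos⟩
    exact ⟨α, hα, aux_L3 f B hBsymm hB α hpos⟩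
  have hiiimpi : (∃ α : ℝ, 0 ≤ α ∧ ∃ h : Matrix (Fin 2) (Fin 2) ℝ → ℝ, IsSymQuadForm2 h ∧
        ConvexOn ℝ {ε : Matrix (Fin 2) (Fin 2) ℝ | ε.IsSymm} h ∧
        ∀ ε : Matrix (Fin 2) (Fin 2) ℝ, ε.IsSymm → f ε = h ε - α * ε.det) →
      SymPolyconvex2 f := by
    rintro ⟨α, hα, h, _, hhc, heq⟩
    exact aux_L1 f α hα h hhc heq
  exact ⟨⟨fun hpc => hiiiimpii (himpiii hpc), hiiimpi⟩,
    ⟨himpiii, fun hiii => hiiimpi (hiiiimpii hiii)⟩⟩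
end

section
/- Let d ≥ 1 and let g : S^{d×d} × S^{d×d} → ℝ be convex. Suppose there exist ε̂ ∈ S^{d×d} and a constant C > 0 such that g(ε̂, x⊗x) ≤ C for all x ∈ ℝ^d. Then for all ε, η ∈ S^{d×d}, every matrix B ∈ S^{d×d} satisfying g(ε, η̃) ≥ g(ε, η) + B:(η̃ − η) for all η̃ ∈ S^{d×d} is negative semi-definite. -/
open Matrix

/-- Frobenius inner product `A:B = Σ_{i,j} A_{ij} B_{ij}` of d×d matrices. -/
def mdotD {d : ℕ} (A B : Matrix (Fin d) (Fin d) ℝ) : ℝ := ∑ i, ∑ j, A i j * B i j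

lemma vecMulVec_isSymm {d : ℕ} (x : Fin d → ℝ) : (vecMulVec x x).IsSymm := by
  ext i j
  simp [Matrix.transpose_apply, Matrix.vecMulVec_apply, mul_comm]

lemma smul_vecMulVec {d : ℕ} (c : ℝ) (hc : 0 ≤ c) (x : Fin d → ℝ) :
    c • vecMulVec x x = vecMulVec (Real.sqrt c • x) (Real.sqrt c • x) := by
  ext i j
  simp only [Matrix.smul_apply, Matrix.vecMulVec_apply, Pi.smul_apply, smul_eq_mul]
  have : Real.sqrt c * Real.sqrt c = c := Real.mul_self_sqrt hc
  rw [mul_mul_mul_comm, this]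

lemma mdotD_vecMulVec {d : ℕ} (B : Matrix (Fin d) (Fin d) ℝ) (x : Fin d → ℝ) :
    mdotD B (vecMulVec x x) = B.mulVec x ⬝ᵥ x := by
  simp only [mdotD, Matrix.vecMulVec_apply, Matrix.mulVec, dotProduct,
    Finset.sum_mul]
  refine Finset.sum_congr rfl fun i _ => Finset.sum_congr rfl fun j _ => by ring

/-- Let `g : S^{d×d} × S^{d×d} → ℝ` be convex with `g (ε̂, x⊗x) ≤ C` for some symmetric
`ε̂`, some `C > 0` and all `x ∈ ℝ^d`. Then every partial subgradient of `g` with respect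
to the second variable is negative semi-definite. -/
theorem partial_subgradients_negSemidef (d : ℕ) (hd : 1 ≤ d)
    (g : Matrix (Fin d) (Fin d) ℝ × Matrix (Fin d) (Fin d) ℝ → ℝ)
    (hg : ConvexOn ℝ {p : Matrix (Fin d) (Fin d) ℝ × Matrix (Fin d) (Fin d) ℝ |
      p.1.IsSymm ∧ p.2.IsSymm} g)
    (εhat : Matrix (Fin d) (Fin d) ℝ) (hεhat : εhat.IsSymm) (C : ℝ) (hC : 0 < C)
    (hbound : ∀ x : Fin d → ℝ, g (εhat, vecMulVec x x) ≤ C) :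
    ∀ ε η : Matrix (Fin d) (Fin d) ℝ, ε.IsSymm → η.IsSymm →
      ∀ B : Matrix (Fin d) (Fin d) ℝ, B.IsSymm →
        (∀ η' : Matrix (Fin d) (Fin d) ℝ, η'.IsSymm →
          g (ε, η) + mdotD B (η' - η) ≤ g (ε, η')) →
        ∀ x : Fin d → ℝ, B.mulVec x ⬝ᵥ x ≤ 0 := by
  intro ε η hε hη B hB hsub x
  -- bound g(ε̂, c • x⊗x) ≤ C for c ≥ 0
  have hsq : ∀ c : ℝ, 0 ≤ c → g (εhat, c • vecMulVec x x) ≤ C := by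
    intro c hc
    rw [smul_vecMulVec c hc x]
    exact hbound _
  set M : ℝ := C / 2 + g ((2:ℝ) • ε - εhat, (2:ℝ) • η) / 2 with hM
  -- key: g(ε, η + s • x⊗x) ≤ M for all s ≥ 0
  have hkey : ∀ s : ℝ, 0 ≤ s → g (ε, η + s • vecMulVec x x) ≤ M := by
    intro s hs
    have h1 : ((εhat, (2 * s) • vecMulVec x x) :
        Matrix (Fin d) (Fin d) ℝ × Matrix (Fin d) (Fin d) ℝ) ∈
        {p : Matrix (Fin d) (Fin d) ℝ × Matrix (Fin d) (Fin d) ℝ |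
          p.1.IsSymm ∧ p.2.IsSymm} := by
      refine ⟨hεhat, ?_⟩
      exact (vecMulVec_isSymm x).smul _
    have h2 : (((2:ℝ) • ε - εhat, (2:ℝ) • η) :
        Matrix (Fin d) (Fin d) ℝ × Matrix (Fin d) (Fin d) ℝ) ∈
        {p : Matrix (Fin d) (Fin d) ℝ × Matrix (Fin d) (Fin d) ℝ |
          p.1.IsSymm ∧ p.2.IsSymm} := by
      refine ⟨?_, hη.smul _⟩
      exact (hε.smul (2:ℝ)).sub hεhat
    have := hg.2 h1 h2 (by norm_num : (0:ℝ) ≤ 1/2) (by norm_num : (0:ℝ) ≤ 1/2)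
      (by norm_num)
    have hcomb : (1/2 : ℝ) • ((εhat, (2 * s) • vecMulVec x x) :
        Matrix (Fin d) (Fin d) ℝ × Matrix (Fin d) (Fin d) ℝ)
        + (1/2 : ℝ) • (((2:ℝ) • ε - εhat, (2:ℝ) • η) :
        Matrix (Fin d) (Fin d) ℝ × Matrix (Fin d) (Fin d) ℝ)
        = (ε, η + s • vecMulVec x x) := by
      apply Prod.ext
      · show (1/2 : ℝ) • εhat + (1/2 : ℝ) • ((2:ℝ) • ε - εhat) = ε
        ext i j
        simp [Matrix.smul_apply, Matrix.sub_apply]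
        ring
      · show (1/2 : ℝ) • ((2 * s) • vecMulVec x x) + (1/2 : ℝ) • ((2:ℝ) • η)
          = η + s • vecMulVec x x
        ext i j
        simp [Matrix.smul_apply, Matrix.add_apply]
        ring
    rw [hcomb] at this
    calc g (ε, η + s • vecMulVec x x)
        ≤ (1/2 : ℝ) * g (εhat, (2 * s) • vecMulVec x x)
          + (1/2 : ℝ) * g ((2:ℝ) • ε - εhat, (2:ℝ) • η) := by
          simpa using this
      _ ≤ (1/2 : ℝ) * C + (1/2 : ℝ) * g ((2:ℝ) • ε - εhat, (2:ℝ) • η) := by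
          have := hsq (2 * s) (by linarith)
          nlinarith
      _ = M := by rw [hM]; ring
  -- subgradient inequality at η' = η + s • x⊗x
  have hsub' : ∀ s : ℝ, 0 ≤ s → g (ε, η) + s * (B.mulVec x ⬝ᵥ x) ≤ M := by
    intro s hs
    have hsym : (η + s • vecMulVec x x).IsSymm := hη.add ((vecMulVec_isSymm x).smul _)
    have := hsub (η + s • vecMulVec x x) hsym
    have hdot : mdotD B (η + s • vecMulVec x x - η) = s * (B.mulVec x ⬝ᵥ x) := by
      have : η + s • vecMulVec x x - η = s • vecMulVec x x := by abel
      rw [this]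
      rw [← mdotD_vecMulVec B x]
      simp only [mdotD, Matrix.smul_apply, smul_eq_mul, Finset.mul_sum]
      refine Finset.sum_congr rfl fun i _ => Finset.sum_congr rfl fun j _ => by ring
    rw [hdot] at this
    exact this.trans (hkey s hs)
  by_contra hpos
  push_neg at hpos
  set t := B.mulVec x ⬝ᵥ x
  have hM0 : g (ε, η) ≤ M := by simpa using hsub' 0 le_rfl
  have hs0 : (0:ℝ) ≤ (M - g (ε, η) + 1) / t :=
    div_nonneg (by linarith) hpos.le
  have := hsub' _ hs0
  rw [div_mul_cancel₀ _ (ne_of_gt hpos)] at this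
  linarith
end
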